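/- Let F be a set-valued map from a finite-dimensional normed space X to R^p, Lipschitz around x, and let y ∈ F(x) be a properly minimal element of F(x) with respect to a pointed closed convex cone P with nonempty interior. Let S be a nonempty compact subset of X × R^p. Then the set cl(⋃_{(v,w) ∈ S} (w + DF↑((x,y); v))) is P-bounded, i.e., its recession cone intersects -P only at 0. -/

import Mathlib

open Filter Topology Pointwise

/-- Contingent cone to `S` at `z`. -/
def contingentCone {E : Type*} [NormedAddCommGroup E] [NormedSpace ℝ E]
    (S : Set E) (z : E) : Set E :=
  {v | ∃ h : ℕ → ℝ, ∃ vk : ℕ → E, (∀ k, 0 < h k) ∧ Tendsto h atTop (𝓝 0) ∧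
    Tendsto vk atTop (𝓝 v) ∧ ∀ k, z + h k • vk k ∈ S}

/-- Recession cone of `S`. -/
def recessionCone {E : Type*} [NormedAddCommGroup E] [NormedSpace ℝ E]
    (S : Set E) : Set E :=
  {y | ∃ h : ℕ → ℝ, ∃ yk : ℕ → E, (∀ k, 0 < h k) ∧ Tendsto h atTop (𝓝 0) ∧
    (∀ k, yk k ∈ S) ∧ Tendsto (fun k => h k • yk k) atTop (𝓝 y)}

/-- Set of minimal elements of `S` with respect to the ordering cone `P`. -/
def minimalSet {E : Type*} [NormedAddCommGroup E] [NormedSpace ℝ E]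
    (S P : Set E) : Set E :=
  {y | y ∈ S ∧ ((fun d => y - d) '' P) ∩ S = {y}}

/-- Contingent derivative of a set-valued map `F` at `(x, y)` in direction `v`. -/
def contDeriv {X E : Type*} [NormedAddCommGroup X] [NormedSpace ℝ X]
    [NormedAddCommGroup E] [NormedSpace ℝ E]
    (F : X → Set E) (x : X) (y : E) (v : X) : Set E :=
  {w | ∃ h : ℕ → ℝ, ∃ vk : ℕ → X, ∃ wk : ℕ → E, (∀ k, 0 < h k) ∧
    Tendsto h atTop (𝓝 0) ∧ Tendsto vk atTop (𝓝 v) ∧ Tendsto wk atTop (𝓝 w) ∧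
    ∀ k, y + h k • wk k ∈ F (x + h k • vk k)}

/-- `F` is Lipschitz (with constant `l`) on a neighborhood of `x`. -/
def LipschitzAround {X E : Type*} [NormedAddCommGroup X] [NormedSpace ℝ X]
    [NormedAddCommGroup E] [NormedSpace ℝ E]
    (F : X → Set E) (x : X) (l : ℝ) : Prop :=
  ∃ O ∈ 𝓝 x, ∀ x1 ∈ O, ∀ x2 ∈ O,
    F x1 ⊆ F x2 + Metric.closedBall (0 : E) (l * ‖x1 - x2‖)

/-! Lipschitz continuity of `F↑ = F + P` around `x` puts `DF↑((x, y); v)` and the contingent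
cone `T = T_{F(x)+P}(y)` within Hausdorff distance `l‖v‖` of each other. Since `S` is bounded,
the union over `S` lies in `T + closedBall 0 R` for some `R` (and is nonempty, as `0 ∈ T`), and
so does its closure after enlarging `R`. As `T` is a closed cone, the recession cone of such a
set is contained in `T`, and proper minimality says `T ∩ (-P) = {0}`. -/

open Metric

section NormedGroup

variable {E : Type*} [NormedAddCommGroup E]

theorem closure_subset_add_closedBall {K S : Set E} {r : ℝ} (hS : S ⊆ K + closedBall 0 r) :
    closure S ⊆ K + closedBall 0 (r + 1) := by
  intro z hz
  obtain ⟨s, hs, hzs⟩ := mem_closure_iff.mp hz 1 one_pos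
  obtain ⟨a, ha, b, hb, rfl⟩ := Set.mem_add.mp (hS hs)
  refine Set.mem_add.mpr ⟨a, ha, b + (z - (a + b)), ?_, by rw [← add_assoc, add_sub_cancel]⟩
  rw [mem_closedBall_zero_iff] at hb ⊢
  calc ‖b + (z - (a + b))‖ ≤ ‖b‖ + ‖z - (a + b)‖ := norm_add_le _ _
    _ ≤ r + 1 := add_le_add hb (by rw [← dist_eq_norm]; exact hzs.le)

theorem exists_subseq_tendsto_of_eventually_norm_le [ProperSpace E] {e : ℕ → E}
    {r : ℕ → ℝ} {r₀ : ℝ} (hr : Tendsto r atTop (𝓝 r₀)) (he : ∀ᶠ k in atTop, ‖e k‖ ≤ r k) :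
    ∃ e₀, ‖e₀‖ ≤ r₀ ∧ ∃ φ : ℕ → ℕ, StrictMono φ ∧ Tendsto (e ∘ φ) atTop (𝓝 e₀) := by
  have hball : ∀ᶠ k in atTop, e k ∈ closedBall (0 : E) (r₀ + 1) := by
    filter_upwards [he, hr.eventually_le_const (lt_add_one r₀)] with k hk hrk
    exact mem_closedBall_zero_iff.mpr (hk.trans hrk)
  obtain ⟨e₀, -, φ, hφ, he₀⟩ :=
    tendsto_subseq_of_frequently_bounded isBounded_closedBall hball.frequently
  exact ⟨e₀, le_of_tendsto_of_tendsto he₀.norm (hr.comp hφ.tendsto_atTop)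
    (hφ.tendsto_atTop.eventually he), φ, hφ, he₀⟩

end NormedGroup

section Cones

variable {E : Type*} [NormedAddCommGroup E] [NormedSpace ℝ E]

theorem mem_contingentCone_of_eventually {S : Set E} {z v : E} {h : ℕ → ℝ} {vk : ℕ → E}
    (hpos : ∀ k, 0 < h k) (hh : Tendsto h atTop (𝓝 0)) (hv : Tendsto vk atTop (𝓝 v))
    (hmem : ∀ᶠ k in atTop, z + h k • vk k ∈ S) : v ∈ contingentCone S z := by
  obtain ⟨N, hN⟩ := eventually_atTop.mp hmem
  exact ⟨fun k => h (k + N), fun k => vk (k + N), fun k => hpos _,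
    hh.comp (tendsto_add_atTop_nat N), hv.comp (tendsto_add_atTop_nat N),
    fun k => hN _ (Nat.le_add_left N k)⟩

theorem smul_mem_contingentCone {S : Set E} {z v : E} (hv : v ∈ contingentCone S z)
    {c : ℝ} (hc : 0 < c) : c • v ∈ contingentCone S z := by
  obtain ⟨h, vk, hpos, hh, hvk, hmem⟩ := hv
  refine ⟨fun k => h k / c, fun k => c • vk k, fun k => div_pos (hpos k) hc, ?_,
    hvk.const_smul c, fun k => ?_⟩
  · simpa using hh.div_const c
  · rw [smul_smul, div_mul_cancel₀ _ hc.ne']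
    exact hmem k

theorem isClosed_contingentCone (S : Set E) (z : E) : IsClosed (contingentCone S z) := by
  refine closure_subset_iff_isClosed.mp fun a ha => ?_
  have hstep : ∀ j : ℕ, ∃ (t : ℝ) (v : E), 0 < t ∧ t < 1 / ((j : ℝ) + 1) ∧
      dist v a < 2 * (1 / ((j : ℝ) + 1)) ∧ z + t • v ∈ S := by
    intro j
    have hε : (0 : ℝ) < 1 / (j + 1) := by positivity
    obtain ⟨u, ⟨h, vk, hpos, hh, hvk, hmem⟩, hua⟩ := mem_closure_iff.mp ha _ hε
    obtain ⟨k, hhk, hvku⟩ :=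
      ((hh.eventually_lt_const hε).and (tendsto_nhds.mp hvk _ hε)).exists
    refine ⟨h k, vk k, hpos k, hhk, ?_, hmem k⟩
    calc dist (vk k) a ≤ dist (vk k) u + dist u a := dist_triangle _ _ _
      _ < 1 / (j + 1) + 1 / (j + 1) := add_lt_add hvku (by rwa [dist_comm])
      _ = 2 * (1 / (j + 1)) := by ring
  choose t v ht_pos ht_lt hva hmem using hstep
  have hbound : Tendsto (fun j : ℕ => 2 * (1 / ((j : ℝ) + 1))) atTop (𝓝 0) := by
    simpa using tendsto_one_div_add_atTop_nhds_zero_nat.const_mul (2 : ℝ)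
  refine ⟨t, v, ht_pos, ?_, ?_, hmem⟩
  · exact squeeze_zero (fun j => (ht_pos j).le)
      (fun j => (ht_lt j).le) tendsto_one_div_add_atTop_nhds_zero_nat
  · exact tendsto_iff_dist_tendsto_zero.mpr
      (squeeze_zero (fun j => dist_nonneg) (fun j => (hva j).le) hbound)

theorem zero_mem_recessionCone {S : Set E} (hS : S.Nonempty) : (0 : E) ∈ recessionCone S := by
  obtain ⟨s, hs⟩ := hS
  refine ⟨fun k => 1 / ((k : ℝ) + 1), fun _ => s, fun k => by positivity,
    tendsto_one_div_add_atTop_nhds_zero_nat, fun _ => hs, ?_⟩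
  simpa using (tendsto_one_div_add_atTop_nhds_zero_nat (𝕜 := ℝ)).smul_const s

theorem recessionCone_mono {S T : Set E} (hST : S ⊆ T) : recessionCone S ⊆ recessionCone T :=
  fun _ ⟨h, yk, hpos, hh, hmem, hy⟩ => ⟨h, yk, hpos, hh, fun k => hST (hmem k), hy⟩

theorem recessionCone_add_closedBall_subset {K : Set E} (hK : IsClosed K)
    (hKcone : ∀ c : ℝ, 0 < c → ∀ v ∈ K, c • v ∈ K) (r : ℝ) :
    recessionCone (K + closedBall 0 r) ⊆ K := by
  rintro z ⟨h, zk, hpos, hh, hmem, hz⟩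
  choose a ha b hb hab using fun k => Set.mem_add.mp (hmem k)
  have hb0 : Tendsto (fun k => h k • b k) atTop (𝓝 0) := by
    refine squeeze_zero_norm (fun k => ?_) (by simpa using hh.mul_const r)
    rw [norm_smul, Real.norm_of_nonneg (hpos k).le]
    exact mul_le_mul_of_nonneg_left (mem_closedBall_zero_iff.mp (hb k)) (hpos k).le
  have ha_lim : Tendsto (fun k => h k • a k) atTop (𝓝 z) := by
    refine (by simpa using hz.sub hb0 : Tendsto _ atTop (𝓝 z)).congr fun k => ?_
    rw [← hab k, smul_add, add_sub_cancel_right]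
  exact hK.mem_of_tendsto ha_lim (Eventually.of_forall fun k => hKcone _ (hpos k) _ (ha k))

theorem exists_add_smul_sub_mem {A : Set E} {z w : E} {t r : ℝ} (ht : 0 < t)
    (hmem : z + t • w ∈ A + closedBall 0 (t * r)) :
    ∃ e ∈ closedBall (0 : E) r, z + t • (w - e) ∈ A := by
  obtain ⟨a, ha, b, hb, hab⟩ := Set.mem_add.mp hmem
  refine ⟨t⁻¹ • b, ?_, ?_⟩
  · rw [mem_closedBall_zero_iff] at hb ⊢
    rw [norm_smul, Real.norm_of_nonneg (inv_pos.mpr ht).le, inv_mul_le_iff₀ ht]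
    exact hb
  · rwa [smul_sub, smul_inv_smul₀ ht.ne', ← add_sub_assoc, ← hab, add_sub_cancel_right]

end Cones

section SetValued

variable {X E : Type*} [NormedAddCommGroup X] [NormedSpace ℝ X]
  [NormedAddCommGroup E] [NormedSpace ℝ E] {G : X → Set E} {x : X} {l : ℝ}

theorem mem_contDeriv_of_eventually {y : E} {v : X} {w : E} {h : ℕ → ℝ} {vk : ℕ → X}
    {wk : ℕ → E} (hpos : ∀ k, 0 < h k) (hh : Tendsto h atTop (𝓝 0))
    (hv : Tendsto vk atTop (𝓝 v)) (hw : Tendsto wk atTop (𝓝 w))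
    (hmem : ∀ᶠ k in atTop, y + h k • wk k ∈ G (x + h k • vk k)) : w ∈ contDeriv G x y v := by
  obtain ⟨N, hN⟩ := eventually_atTop.mp hmem
  exact ⟨fun k => h (k + N), fun k => vk (k + N), fun k => wk (k + N), fun k => hpos _,
    hh.comp (tendsto_add_atTop_nat N), hv.comp (tendsto_add_atTop_nat N),
    hw.comp (tendsto_add_atTop_nat N), fun k => hN _ (Nat.le_add_left N k)⟩

theorem LipschitzAround.add_set (hG : LipschitzAround G x l) (P : Set E) :
    LipschitzAround (fun x' => G x' + P) x l := by
  obtain ⟨O, hO, hlip⟩ := hG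
  refine ⟨O, hO, fun x₁ h₁ x₂ h₂ => ?_⟩
  calc G x₁ + P ⊆ G x₂ + closedBall 0 (l * ‖x₁ - x₂‖) + P :=
        Set.add_subset_add_right (hlip x₁ h₁ x₂ h₂)
    _ = G x₂ + P + closedBall 0 (l * ‖x₁ - x₂‖) := add_right_comm _ _ _

theorem LipschitzAround.eventually_nhds (hG : LipschitzAround G x l) :
    ∀ᶠ x' in 𝓝 x, G x' ⊆ G x + closedBall 0 (l * ‖x' - x‖) ∧
      G x ⊆ G x' + closedBall 0 (l * ‖x' - x‖) := by
  obtain ⟨O, hO, hlip⟩ := hG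
  filter_upwards [hO] with x' hx'
  exact ⟨hlip x' hx' x (mem_of_mem_nhds hO),
    norm_sub_rev x' x ▸ hlip x (mem_of_mem_nhds hO) x' hx'⟩

theorem norm_add_smul_sub_self {t : ℝ} (ht : 0 < t) (v : X) : ‖x + t • v - x‖ = t * ‖v‖ := by
  rw [add_sub_cancel_left, norm_smul, Real.norm_of_nonneg ht.le]

variable [ProperSpace E]

theorem contDeriv_subset_contingentCone_add_closedBall (hG : LipschitzAround G x l)
    (y : E) (v : X) : contDeriv G x y v ⊆ contingentCone (G x) y + closedBall 0 (l * ‖v‖) := by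
  rintro w ⟨h, vk, wk, hpos, hh, hv, hw, hmem⟩
  have hxk : Tendsto (fun k => x + h k • vk k) atTop (𝓝 x) := by
    simpa using tendsto_const_nhds.add (hh.smul hv)
  have hshift : ∀ k, G (x + h k • vk k) ⊆ G x + closedBall 0 (l * ‖x + h k • vk k - x‖) →
      ∃ e ∈ closedBall (0 : E) (l * ‖vk k‖), y + h k • (wk k - e) ∈ G x := by
    intro k hk
    rw [norm_add_smul_sub_self (hpos k), mul_left_comm] at hk
    exact exists_add_smul_sub_mem (hpos k) (hk (hmem k))
  choose! e he heG using hshift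
  have hnear := (hxk.eventually hG.eventually_nhds).mono fun _ hk => hk.1
  obtain ⟨e₀, he₀, φ, hφ, hlim⟩ := exists_subseq_tendsto_of_eventually_norm_le
    (hv.norm.const_mul l) (hnear.mono fun k hk => mem_closedBall_zero_iff.mp (he k hk))
  refine ⟨w - e₀, ?_, e₀, mem_closedBall_zero_iff.mpr he₀, sub_add_cancel w e₀⟩
  exact mem_contingentCone_of_eventually (fun j => hpos (φ j)) (hh.comp hφ.tendsto_atTop)
    ((hw.comp hφ.tendsto_atTop).sub hlim)
    (hφ.tendsto_atTop.eventually (hnear.mono fun k hk => heG k hk))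

theorem contingentCone_subset_contDeriv_add_closedBall (hG : LipschitzAround G x l)
    (y : E) (v : X) : contingentCone (G x) y ⊆ contDeriv G x y v + closedBall 0 (l * ‖v‖) := by
  rintro t ⟨h, tk, hpos, hh, ht, hmem⟩
  have hxk : Tendsto (fun k => x + h k • v) atTop (𝓝 x) := by
    simpa using tendsto_const_nhds.add (hh.smul_const v)
  have hshift : ∀ k, G x ⊆ G (x + h k • v) + closedBall 0 (l * ‖x + h k • v - x‖) →
      ∃ e ∈ closedBall (0 : E) (l * ‖v‖), y + h k • (tk k - e) ∈ G (x + h k • v) := by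
    intro k hk
    rw [norm_add_smul_sub_self (hpos k), mul_left_comm] at hk
    exact exists_add_smul_sub_mem (hpos k) (hk (hmem k))
  choose! e he heG using hshift
  have hnear := (hxk.eventually hG.eventually_nhds).mono fun _ hk => hk.2
  obtain ⟨e₀, he₀, φ, hφ, hlim⟩ := exists_subseq_tendsto_of_eventually_norm_le
    tendsto_const_nhds (hnear.mono fun k hk => mem_closedBall_zero_iff.mp (he k hk))
  refine ⟨t - e₀, ?_, e₀, mem_closedBall_zero_iff.mpr he₀, sub_add_cancel t e₀⟩
  exact mem_contDeriv_of_eventually (fun j => hpos (φ j)) (hh.comp hφ.tendsto_atTop)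
    tendsto_const_nhds ((ht.comp hφ.tendsto_atTop).sub hlim)
    (hφ.tendsto_atTop.eventually (hnear.mono fun k hk => heG k hk))

end SetValued

theorem stmt19_general {p : ℕ} {X : Type*} [NormedAddCommGroup X] [NormedSpace ℝ X]
    (P : Set (EuclideanSpace ℝ (Fin p)))
    (F : X → Set (EuclideanSpace ℝ (Fin p))) (x : X) (l : ℝ)
    (hLip : LipschitzAround F x l)
    (y : EuclideanSpace ℝ (Fin p))
    (hyproper : contingentCone (F x + P) y ∩ (-P) = {0})
    (S : Set (X × EuclideanSpace ℝ (Fin p)))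
    (hSne : S.Nonempty) (hS : IsCompact S) :
    recessionCone (closure
      (⋃ q ∈ S, (fun z => q.2 + z) '' contDeriv (fun x' => F x' + P) x y q.1))
      ∩ (-P) = {0} := by
  set T := contingentCone (F x + P) y
  set A := ⋃ q ∈ S, (fun z => q.2 + z) '' contDeriv (fun x' => F x' + P) x y q.1
  have hG := hLip.add_set P
  have hT0 : 0 ∈ T ∩ -P := hyproper ▸ rfl
  obtain ⟨R, hR⟩ := hS.bddAbove_image (f := fun q => ‖q.2‖ + l * ‖q.1‖) (by fun_prop)
  have hAT : A ⊆ T + closedBall 0 R := by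
    refine Set.iUnion₂_subset fun q hq => ?_
    rintro _ ⟨u, hu, rfl⟩
    obtain ⟨t, ht, b, hb, rfl⟩ := contDeriv_subset_contingentCone_add_closedBall hG y q.1 hu
    refine ⟨t, ht, q.2 + b, ?_, add_left_comm _ _ _⟩
    rw [mem_closedBall_zero_iff] at hb ⊢
    calc ‖q.2 + b‖ ≤ ‖q.2‖ + l * ‖q.1‖ := (norm_add_le _ _).trans (add_le_add le_rfl hb)
      _ ≤ R := hR ⟨q, hq, rfl⟩
  have hAne : A.Nonempty := by
    obtain ⟨q, hq⟩ := hSne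
    obtain ⟨u, hu, -⟩ := contingentCone_subset_contDeriv_add_closedBall hG y q.1 hT0.1
    exact ⟨q.2 + u, Set.mem_iUnion₂.mpr ⟨q, hq, u, hu, rfl⟩⟩
  have hrec : recessionCone (closure A) ⊆ T :=
    (recessionCone_mono (closure_subset_add_closedBall hAT)).trans
      (recessionCone_add_closedBall_subset (isClosed_contingentCone _ _)
        (fun _ hc _ hv => smul_mem_contingentCone hv hc) _)
  refine Set.Subset.antisymm (fun z hz => hyproper ▸ ⟨hrec hz.1, hz.2⟩) ?_
  exact Set.singleton_subset_iff.mpr ⟨zero_mem_recessionCone hAne.closure, hT0.2⟩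

theorem stmt19 {p : ℕ} {X : Type*} [NormedAddCommGroup X] [NormedSpace ℝ X]
    [FiniteDimensional ℝ X]
    (P : Set (EuclideanSpace ℝ (Fin p)))
    (hPconv : Convex ℝ P) (hPcone : ∀ (c : ℝ), 0 ≤ c → ∀ x ∈ P, c • x ∈ P)
    (hPclosed : IsClosed P) (hP0 : (0 : EuclideanSpace ℝ (Fin p)) ∈ P)
    (hPpointed : P ∩ (-P) = {0}) (hPint : (interior P).Nonempty)
    (F : X → Set (EuclideanSpace ℝ (Fin p))) (x : X) (l : ℝ) (hl : 0 ≤ l)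
    (hLip : LipschitzAround F x l)
    (y : EuclideanSpace ℝ (Fin p))
    (hymin : y ∈ minimalSet (F x) P)
    (hyproper : contingentCone (F x + P) y ∩ (-P) = {0})
    (S : Set (X × EuclideanSpace ℝ (Fin p)))
    (hSne : S.Nonempty) (hS : IsCompact S) :
    recessionCone (closure
      (⋃ q ∈ S, (fun z => q.2 + z) '' contDeriv (fun x' => F x' + P) x y q.1))
      ∩ (-P) = {0} :=
  stmt19_general P F x l hLip y hyproper S hSne hS
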